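/- arXiv:1512.00311 — 2 statements merged into one kernel-verified Lean document; each statement's English description precedes it below -/
import Mathlib

section
/- Let A be real skew-symmetric and nonsingular with Ax = b. If x^E ∈ K_q(A², Ab) satisfies pᵀ(b - Ax^E) = 0 for all p ∈ K_q(A², b), and x^G ∈ K_{2q}(A, b) satisfies pᵀ(b - Ax^G) = 0 for all p ∈ K_{2q}(A, b), then x^G = x^E, provided the Galerkin iterate x^G exists uniquely. -/
open Matrix

def krylov {n : ℕ} (M : Matrix (Fin n) (Fin n) ℝ) (v : Fin n → ℝ) (m : ℕ) :
    Submodule ℝ (Fin n → ℝ) :=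
  Submodule.span ℝ ((fun k => (M ^ k) *ᵥ v) '' Set.Iio m)

noncomputable def enorm {n : ℕ} (v : Fin n → ℝ) : ℝ := Real.sqrt (∑ i, v i ^ 2)

/-! Since `A` is skew, `(A^i b) ⬝ (A^j b) = 0` whenever `i + j` is odd. The CGNE iterate `xE`
lies in `K_{2q}(A, b)`, and its residual `b - A xE` lies in `K_{q+1}(A², b)`, the span of the
even powers. So the residual is orthogonal to the even generators `A^{2k} b` (`k < q`) by the
CGNE condition and to the odd ones by skewness: `xE` is a Galerkin iterate, hence equals `xG`. -/

section Krylov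

variable {n : ℕ} {M : Matrix (Fin n) (Fin n) ℝ} {v : Fin n → ℝ} {m : ℕ}

lemma pow_mulVec_mem_krylov {k : ℕ} (hk : k < m) : (M ^ k) *ᵥ v ∈ krylov M v m :=
  Submodule.subset_span ⟨k, hk, rfl⟩

lemma krylov_le {S : Submodule ℝ (Fin n → ℝ)} (h : ∀ k < m, (M ^ k) *ᵥ v ∈ S) :
    krylov M v m ≤ S :=
  Submodule.span_le.mpr (by rintro _ ⟨k, hk, rfl⟩; exact h k hk)

lemma dotProduct_eq_zero_of_mem_krylov {p w : Fin n → ℝ}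
    (h : ∀ k < m, (M ^ k *ᵥ v) ⬝ᵥ w = 0) (hp : p ∈ krylov M v m) : p ⬝ᵥ w = 0 :=
  krylov_le (S := LinearMap.ker ((dotProductBilin ℝ ℝ).flip w)) h hp

lemma krylov_sq_mulVec_le_krylov : krylov (M ^ 2) (M *ᵥ v) m ≤ krylov M v (2 * m) :=
  krylov_le fun k hk => by
    rw [mulVec_mulVec, ← pow_mul, ← pow_succ]
    exact pow_mulVec_mem_krylov (by omega)

lemma mulVec_mem_krylov_sq_succ {x : Fin n → ℝ} (hx : x ∈ krylov (M ^ 2) (M *ᵥ v) m) :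
    M *ᵥ x ∈ krylov (M ^ 2) v (m + 1) := by
  refine krylov_le (S := (krylov (M ^ 2) v (m + 1)).comap M.mulVecLin) (fun k hk => ?_) hx
  have hpow : M * (M ^ 2) ^ k * M = (M ^ 2) ^ (k + 1) := by
    rw [← pow_mul, ← pow_succ', ← pow_succ, ← pow_mul, mul_add_one]
  rw [Submodule.mem_comap, mulVecLin_apply, mulVec_mulVec, mulVec_mulVec, hpow]
  exact pow_mulVec_mem_krylov (by omega)

end Krylov

section Skew

variable {n : ℕ} {A : Matrix (Fin n) (Fin n) ℝ}

lemma mulVec_dotProduct_eq_dotProduct_transpose_mulVec (u w : Fin n → ℝ) :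
    (A *ᵥ u) ⬝ᵥ w = u ⬝ᵥ (Aᵀ *ᵥ w) := by
  rw [dotProduct_mulVec, vecMul_transpose]

lemma dotProduct_mulVec_self_of_transpose_eq_neg (hA : Aᵀ = -A) (v : Fin n → ℝ) :
    v ⬝ᵥ A *ᵥ v = 0 := by
  have h := mulVec_dotProduct_eq_dotProduct_transpose_mulVec (A := A) v v
  rw [hA, neg_mulVec, dotProduct_neg, dotProduct_comm] at h
  linarith

lemma transpose_pow_odd_of_transpose_eq_neg (hA : Aᵀ = -A) (k : ℕ) :
    (A ^ (2 * k + 1))ᵀ = -A ^ (2 * k + 1) := by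
  rw [transpose_pow, hA, Odd.neg_pow ⟨k, rfl⟩]

lemma pow_odd_mulVec_dotProduct_pow_even_mulVec (hA : Aᵀ = -A) (v : Fin n → ℝ) (s t : ℕ) :
    (A ^ (2 * s + 1) *ᵥ v) ⬝ᵥ (A ^ (2 * t) *ᵥ v) = 0 := by
  rw [mulVec_dotProduct_eq_dotProduct_transpose_mulVec, transpose_pow_odd_of_transpose_eq_neg hA,
    neg_mulVec, dotProduct_neg, mulVec_mulVec, ← pow_add,
    show 2 * s + 1 + 2 * t = 2 * (s + t) + 1 by ring,
    dotProduct_mulVec_self_of_transpose_eq_neg (transpose_pow_odd_of_transpose_eq_neg hA _),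
    neg_zero]

end Skew

theorem galerkin_eq_cgne_general {n : ℕ} (A : Matrix (Fin n) (Fin n) ℝ)
    (hA : Aᵀ = -A) (b xE xG : Fin n → ℝ) (q : ℕ)
    (hxE : xE ∈ krylov (A ^ 2) (A *ᵥ b) q)
    (horthE : ∀ p ∈ krylov (A ^ 2) b q, p ⬝ᵥ (b - A *ᵥ xE) = 0)
    (huniq : ∀ y ∈ krylov A b (2 * q),
      (∀ p ∈ krylov A b (2 * q), p ⬝ᵥ (b - A *ᵥ y) = 0) → y = xG) :
    xG = xE := by
  have hres : b - A *ᵥ xE ∈ krylov (A ^ 2) b (q + 1) :=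
    sub_mem (by simpa using pow_mulVec_mem_krylov (M := A ^ 2) (v := b) q.succ_pos)
      (mulVec_mem_krylov_sq_succ hxE)
  refine (huniq xE (krylov_sq_mulVec_le_krylov hxE) fun p hp =>
    dotProduct_eq_zero_of_mem_krylov (fun j hj => ?_) hp).symm
  obtain ⟨k, rfl | rfl⟩ := Nat.even_or_odd' j
  · rw [pow_mul]
    exact horthE _ (pow_mulVec_mem_krylov (by omega))
  · rw [dotProduct_comm]
    exact dotProduct_eq_zero_of_mem_krylov (fun t _ => by
      rw [dotProduct_comm, ← pow_mul]
      exact pow_odd_mulVec_dotProduct_pow_even_mulVec hA b k t) hres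

theorem galerkin_eq_cgne {n : ℕ} (A : Matrix (Fin n) (Fin n) ℝ)
    (hA : Aᵀ = -A) (hdet : A.det ≠ 0) (b x xE xG : Fin n → ℝ) (q : ℕ)
    (hx : A *ᵥ x = b)
    (hxE : xE ∈ krylov (A ^ 2) (A *ᵥ b) q)
    (horthE : ∀ p ∈ krylov (A ^ 2) b q, p ⬝ᵥ (b - A *ᵥ xE) = 0)
    (hxG : xG ∈ krylov A b (2 * q))
    (horthG : ∀ p ∈ krylov A b (2 * q), p ⬝ᵥ (b - A *ᵥ xG) = 0)
    (huniq : ∀ y ∈ krylov A b (2 * q),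
      (∀ p ∈ krylov A b (2 * q), p ⬝ᵥ (b - A *ᵥ y) = 0) → y = xG) :
    xG = xE :=
  galerkin_eq_cgne_general A hA b xE xG q hxE horthE huniq
end

section
/- If A is real skew-symmetric and x^R ∈ K_q(A², Ab) satisfies (Ap)ᵀ(b - Ax^R) = 0 for all p ∈ K_q(A², Ab), then (Ap)ᵀ(b - Ax^R) = 0 for all p in the larger Krylov subspace K_{2q+1}(A, b). That is, the CGNR iterate satisfies the minimum-residual orthogonality condition on K_{2q+1}(A, b). -/
/-!
Write `r = b - A xR`. For a skew-symmetric `A`, `(Aˢ b) ⬝ (Aᵗ b) = ±(b ⬝ Aˢ⁺ᵗ b) = 0` whenever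
`s + t` is odd, since odd powers of `A` are again skew-symmetric. For `p = Aᵏ b` with `k ≤ 2q`,
the quantity `(A p) ⬝ r` is therefore handled by parity of `k`: for odd `k = 2j + 1` it is the
CGNR condition at `p = (A²)ʲ (A b)`; for even `k` both `b` and `A xR ∈ span {A²ʲ⁺² b}` are
orthogonal to `Aᵏ⁺¹ b` for parity reasons alone.
-/

open Matrix

namespace Matrix

variable {ι R : Type*} [Fintype ι] [CommRing R]

theorem mulVec_dotProduct_eq_dotProduct_transpose_mulVec (M : Matrix ι ι R) (v w : ι → R) :
    (M *ᵥ v) ⬝ᵥ w = v ⬝ᵥ (Mᵀ *ᵥ w) := by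
  rw [dotProduct_comm, dotProduct_mulVec, mulVec_transpose, dotProduct_comm]

theorem dotProduct_mulVec_self_eq_zero_of_transpose_eq_neg [IsAddTorsionFree R]
    {S : Matrix ι ι R} (hS : Sᵀ = -S) (v : ι → R) : v ⬝ᵥ (S *ᵥ v) = 0 := by
  refine self_eq_neg.mp ?_
  calc v ⬝ᵥ (S *ᵥ v) = (Sᵀ *ᵥ v) ⬝ᵥ v := by
        rw [mulVec_dotProduct_eq_dotProduct_transpose_mulVec, transpose_transpose]
    _ = -(v ⬝ᵥ (S *ᵥ v)) := by rw [hS, neg_mulVec, neg_dotProduct, dotProduct_comm]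

theorem pow_mulVec_dotProduct_pow_mulVec_eq_zero [DecidableEq ι] [IsAddTorsionFree R]
    {A : Matrix ι ι R} (hA : Aᵀ = -A) (v : ι → R) {s t : ℕ} (hst : Odd (s + t)) :
    (A ^ s *ᵥ v) ⬝ᵥ (A ^ t *ᵥ v) = 0 := by
  have hskew : v ⬝ᵥ (A ^ (s + t) *ᵥ v) = 0 :=
    dotProduct_mulVec_self_eq_zero_of_transpose_eq_neg (by rw [transpose_pow, hA, hst.neg_pow]) v
  rw [mulVec_dotProduct_eq_dotProduct_transpose_mulVec, transpose_pow, hA, mulVec_mulVec]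
  rcases Nat.even_or_odd s with hs | hs
  · rw [hs.neg_pow, ← pow_add, hskew]
  · rw [hs.neg_pow, neg_mul, neg_mulVec, dotProduct_neg, ← pow_add, hskew, neg_zero]

end Matrix

section Krylov

variable {n : ℕ}

theorem krylov_le_ker_iff (M : Matrix (Fin n) (Fin n) ℝ) (v : Fin n → ℝ) (m : ℕ)
    (f : (Fin n → ℝ) →ₗ[ℝ] ℝ) :
    krylov M v m ≤ LinearMap.ker f ↔ ∀ k < m, f (M ^ k *ᵥ v) = 0 := by
  simp only [krylov, Submodule.span_le, Set.image_subset_iff]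
  rfl

theorem sq_pow_mulVec_mulVec (A : Matrix (Fin n) (Fin n) ℝ) (v : Fin n → ℝ) (j : ℕ) :
    (A ^ 2) ^ j *ᵥ (A *ᵥ v) = A ^ (2 * j + 1) *ᵥ v := by
  rw [mulVec_mulVec, ← pow_mul, ← pow_succ]

theorem pow_odd_mulVec_dotProduct_mulVec_eq_zero_of_mem_krylov_sq
    {A : Matrix (Fin n) (Fin n) ℝ} (hA : Aᵀ = -A) (b : Fin n → ℝ) {q m : ℕ} (hm : Odd m)
    {x : Fin n → ℝ} (hx : x ∈ krylov (A ^ 2) (A *ᵥ b) q) :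
    (A ^ m *ᵥ b) ⬝ᵥ (A *ᵥ x) = 0 := by
  have hker : krylov (A ^ 2) (A *ᵥ b) q ≤ LinearMap.ker (toLinearMap₂' ℝ A (A ^ m *ᵥ b)) := by
    refine (krylov_le_ker_iff _ _ _ _).mpr fun j _ => ?_
    rw [toLinearMap₂'_apply', sq_pow_mulVec_mulVec, mulVec_mulVec, ← pow_succ']
    exact pow_mulVec_dotProduct_pow_mulVec_eq_zero hA b (by grind)
  simpa only [LinearMap.mem_ker, toLinearMap₂'_apply'] using hker hx

end Krylov

theorem cgnr_minres_extends {n : ℕ} (A : Matrix (Fin n) (Fin n) ℝ)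
    (hA : Aᵀ = -A) (b xR : Fin n → ℝ) (q : ℕ)
    (hxR : xR ∈ krylov (A ^ 2) (A *ᵥ b) q)
    (horth : ∀ p ∈ krylov (A ^ 2) (A *ᵥ b) q, (A *ᵥ p) ⬝ᵥ (b - A *ᵥ xR) = 0) :
    ∀ p ∈ krylov A b (2 * q + 1), (A *ᵥ p) ⬝ᵥ (b - A *ᵥ xR) = 0 := by
  set r := b - A *ᵥ xR
  suffices hker : krylov A b (2 * q + 1) ≤ LinearMap.ker (toLinearMap₂' ℝ A r) by
    intro p hp
    simpa only [LinearMap.mem_ker, toLinearMap₂'_apply', dotProduct_comm r] using hker hp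
  refine (krylov_le_ker_iff _ _ _ _).mpr fun k hk => ?_
  rw [toLinearMap₂'_apply', dotProduct_comm, mulVec_mulVec, ← pow_succ']
  rcases Nat.even_or_odd k with ⟨j, rfl⟩ | ⟨j, rfl⟩
  · have hb : (A ^ (j + j + 1) *ᵥ b) ⬝ᵥ b = 0 := by
      simpa only [pow_zero, one_mulVec] using
        pow_mulVec_dotProduct_pow_mulVec_eq_zero hA b (s := j + j + 1) (t := 0) (by grind)
    rw [dotProduct_sub, hb,
      pow_odd_mulVec_dotProduct_mulVec_eq_zero_of_mem_krylov_sq hA b (by grind) hxR, sub_zero]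
  · have hgen : (A ^ 2) ^ j *ᵥ (A *ᵥ b) ∈ krylov (A ^ 2) (A *ᵥ b) q :=
      Submodule.subset_span ⟨j, by grind, rfl⟩
    have h := horth _ hgen
    rwa [sq_pow_mulVec_mulVec, mulVec_mulVec, ← pow_succ'] at h
end
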